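/- arXiv:1711.01668 — 2 statements merged into one kernel-verified Lean document; each statement's English description precedes it below -/
import Mathlib

section
/- Let N be a nontrivial normal subgroup of the rational group R, and let f₁ ∈ N satisfy f₁(I₀) ∩ I₀ = ∅. Then for all g, h ∈ R, the element ([g,h], 1) lies in N, where [g,h] = g⁻¹h⁻¹gh and (k,1) denotes the homeomorphism acting as k on I₀ and identity on I₁. -/
/-- The Cantor space of infinite binary sequences. -/
abbrev Cantor : Type := ℕ → Bool

/-- Prepend a finite binary word to an infinite binary sequence. -/
def prepend (α : List Bool) (ψ : Cantor) : Cantor :=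
  fun n => if h : n < α.length then α.get ⟨n, h⟩ else ψ (n - α.length)

/-- The basic clopen cone `I_α` of sequences beginning with the finite word `α`. -/
def cone (α : List Bool) : Set Cantor :=
  {ψ | ∀ i (h : i < α.length), ψ i = α.get ⟨i, h⟩}

/-- An asynchronous binary transducer with state set `S` (the initial state `s0`,
the transition function `t` and the output function `o`). -/
structure Transducer (S : Type) where
  s0 : S
  t : S → Bool → S
  o : S → Bool → List Bool

/-- The extended transition function on finite binary words. -/
def Transducer.tStar {S : Type} (T : Transducer S) : S → List Bool → S
  | s, [] => s
  | s, b :: α => T.tStar (T.t s b) α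

/-- The extended output function on finite binary words. -/
def Transducer.oStar {S : Type} (T : Transducer S) : S → List Bool → List Bool
  | _, [] => []
  | s, b :: α => T.o s b ++ T.oStar (T.t s b) α

/-- The length-`n` prefix of an infinite binary sequence, as a finite word. -/
def prefixWord (ψ : Cantor) (n : ℕ) : List Bool := (List.range n).map ψ

/-- `l` is a prefix of the infinite sequence `ψ`. -/
def IsPrefixOf (l : List Bool) (ψ : Cantor) : Prop :=
  ∀ i (h : i < l.length), l.get ⟨i, h⟩ = ψ i

/-- The transducer `T` computes the map `f` on infinite binary sequences: on every input
`ψ` the finite outputs along the run are prefixes of `f ψ`, and their lengths tend to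
infinity, so that the infinite concatenated output is exactly `f ψ`. -/
def Transducer.Computes {S : Type} (T : Transducer S) (f : Cantor → Cantor) : Prop :=
  ∀ ψ : Cantor, (∀ n, IsPrefixOf (T.oStar T.s0 (prefixWord ψ n)) (f ψ)) ∧
    (∀ k, ∃ n, k ≤ (T.oStar T.s0 (prefixWord ψ n)).length)

/-- A homeomorphism of the Cantor space is rational if some asynchronous binary
transducer (with finitely many states) computes it. -/
def IsRational (f : Cantor ≃ₜ Cantor) : Prop :=
  ∃ (n : ℕ) (T : Transducer (Fin n)), T.Computes ⇑f

/-- `r` is the restriction `f|_α`: there is a finite word `β` (necessarily the longest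
common prefix of `f(I_α)`) with `f(αω) = β · r(ω)` for all `ω`, where maximality of `β`
is expressed by saying that the outputs of `r` do not all share their first digit. -/
def IsRestrictionAt (f : Cantor ≃ₜ Cantor) (α : List Bool) (r : Cantor → Cantor) : Prop :=
  ∃ β : List Bool, (∀ ψ : Cantor, f (prepend α ψ) = prepend β (r ψ)) ∧
    ∃ ψ ψ' : Cantor, r ψ 0 ≠ r ψ' 0

/-- The set of all restrictions of `f` as `α` ranges over finite binary words. -/
def restrictions (f : Cantor ≃ₜ Cantor) : Set (Cantor → Cantor) :=
  {r | ∃ α : List Bool, IsRestrictionAt f α r}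

/-- `f` has finitely many distinct restrictions. -/
def FinitelyManyRestrictions (f : Cantor ≃ₜ Cantor) : Prop :=
  (restrictions f).Finite

/-- The group of self-homeomorphisms of the Cantor space, with `(f * g) x = f (g x)`. -/
instance : Group (Cantor ≃ₜ Cantor) where
  mul f g := g.trans f
  one := Homeomorph.refl _
  inv := Homeomorph.symm
  mul_assoc _ _ _ := rfl
  one_mul _ := rfl
  mul_one _ := rfl
  inv_mul_cancel f := Homeomorph.ext fun x => f.symm_apply_apply x

/-- `k` is the homeomorphism `(f, g)`, acting as `f` on `I₀` and as `g` on `I₁`. -/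
def IsPair (k f g : Cantor ≃ₜ Cantor) : Prop :=
  (∀ ζ : Cantor, k (prepend [false] ζ) = prepend [false] (f ζ)) ∧
  (∀ ζ : Cantor, k (prepend [true] ζ) = prepend [true] (g ζ))

/-- `x₀` is the first generator of Thompson's group `F`. -/
def IsX0 (x₀ : Cantor ≃ₜ Cantor) : Prop :=
  (∀ ζ : Cantor, x₀ (prepend [false, false] ζ) = prepend [false] ζ) ∧
  (∀ ζ : Cantor, x₀ (prepend [false, true] ζ) = prepend [true, false] ζ) ∧
  (∀ ζ : Cantor, x₀ (prepend [true] ζ) = prepend [true, true] ζ)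

/-- `f` has small support: it is the identity outside a proper nonempty clopen set. -/
def HasSmallSupport (f : Cantor ≃ₜ Cantor) : Prop :=
  ∃ E : Set Cantor, IsClopen E ∧ E.Nonempty ∧ E ≠ Set.univ ∧ ∀ ψ ∉ E, f ψ = ψ

/-- A group `G` of homeomorphisms of the Cantor space is full if every homeomorphism
that locally agrees with `G` belongs to `G`. -/
def Full (G : Subgroup (Cantor ≃ₜ Cantor)) : Prop :=
  ∀ h : Cantor ≃ₜ Cantor,
    (∀ p : Cantor, ∃ U : Set Cantor, IsOpen U ∧ p ∈ U ∧ ∃ g ∈ G, ∀ x ∈ U, h x = g x) →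
    h ∈ G

/-- A group `G` of homeomorphisms of the Cantor space is flexible if for all proper
nonempty clopen sets `E₁, E₂` there is `g ∈ G` with `g(E₁) ⊆ E₂`. -/
def Flexible (G : Subgroup (Cantor ≃ₜ Cantor)) : Prop :=
  ∀ E₁ E₂ : Set Cantor, IsClopen E₁ → E₁.Nonempty → E₁ ≠ Set.univ →
    IsClopen E₂ → E₂.Nonempty → E₂ ≠ Set.univ →
    ∃ g ∈ G, ⇑g '' E₁ ⊆ E₂

/-- The map flipping every `p`-th binary digit (digits are indexed from 1, so the
digit at index `n : ℕ` is the `(n+1)`-st digit). -/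
def flipFun (p : ℕ) (ψ : Cantor) : Cantor :=
  fun n => if p ∣ (n + 1) then !(ψ n) else ψ n

/-!
The pairs `a = (g, 1)` and `b = (h, 1)` are rational: a transducer for `(g, 1)` echoes the first
digit and then runs a transducer for `g` or the identity. Both are supported on `I₀`, and `f₁⁻¹`
moves `I₀` into `I₁`, where `a⁻¹` is trivial; hence `a' = a f₁ a⁻¹ f₁⁻¹ ∈ N` agrees with `a` on
`I₀`. As `b` is supported on `I₀` too and `a'` preserves `I₀`, the commutator with `b` only sees
`a'` on `I₀`: `a'⁻¹ b⁻¹ a' b = a⁻¹ b⁻¹ a b = ([g, h], 1)`, and the left side lies in `N`.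
-/

section SupportedIn

variable {X : Type*} [TopologicalSpace X] {S : Set X} {a a' b f : X ≃ₜ X}

def IsSupportedIn (a : X ≃ₜ X) (S : Set X) : Prop :=
  ∀ x ∉ S, a x = x

lemma IsSupportedIn.inv (ha : IsSupportedIn a S) : IsSupportedIn a⁻¹ S := fun x hx =>
  a.symm_apply_eq.2 (ha x hx).symm

lemma IsSupportedIn.mapsTo (ha : IsSupportedIn a S) : Set.MapsTo a S S := by
  intro x hx
  by_contra hax
  exact hax (by rwa [a.injective (ha _ hax)])

lemma Set.EqOn.homeomorph_inv (h : Set.EqOn a' a S) (ha : Set.MapsTo ⇑(a⁻¹) S S) :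
    Set.EqOn ⇑(a'⁻¹) ⇑(a⁻¹) S := fun x hx =>
  a'.symm_apply_eq.2 (by rw [h (ha hx)]; exact (a.apply_symm_apply x).symm)

lemma IsSupportedIn.eqOn_mul_mul_inv_mul_inv (ha : IsSupportedIn a S)
    (hf : Disjoint (f '' S) S) : Set.EqOn (a * f * a⁻¹ * f⁻¹) a S := by
  intro x hx
  have hfx : f⁻¹ x ∉ S := fun h =>
    Set.disjoint_left.1 hf ⟨f⁻¹ x, h, f.apply_symm_apply x⟩ hx
  change a (f (a⁻¹ (f⁻¹ x))) = a x
  rw [ha.inv _ hfx, Homeomorph.inv_apply, Homeomorph.apply_symm_apply]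

lemma IsSupportedIn.commutator_eq_of_eqOn (ha : IsSupportedIn a S) (hb : IsSupportedIn b S)
    (h : Set.EqOn a' a S) : a'⁻¹ * b⁻¹ * a' * b = a⁻¹ * b⁻¹ * a * b := by
  ext x
  simp only [Homeomorph.mul_apply]
  by_cases hx : x ∈ S
  · have hbx := hb.mapsTo hx
    have habx := ha.mapsTo hbx
    rw [h hbx, h.homeomorph_inv ha.inv.mapsTo (hb.inv.mapsTo habx)]
  · have ha'x : a' x ∉ S := fun h' => hx <| by
      simpa [← h.homeomorph_inv ha.inv.mapsTo h'] using ha.inv.mapsTo h'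
    rw [hb x hx, hb.inv _ ha'x, ha x hx, hb.inv _ hx, ha.inv _ hx]
    simp

end SupportedIn

def tl (x : Cantor) : Cantor := fun n => x (n + 1)

@[simp] lemma prepend_singleton_zero (b : Bool) (ζ : Cantor) : prepend [b] ζ 0 = b := rfl

@[simp] lemma tl_prepend_singleton (b : Bool) (ζ : Cantor) : tl (prepend [b] ζ) = ζ := rfl

lemma prepend_head_tl (x : Cantor) : prepend [x 0] (tl x) = x := by
  funext n
  cases n <;> rfl

lemma mem_cone_singleton {b : Bool} {x : Cantor} : x ∈ cone [b] ↔ x 0 = b := by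
  simp [cone]

lemma continuous_prepend_singleton (b : Bool) : Continuous (prepend [b]) :=
  continuous_pi fun n => by
    cases n
    · exact continuous_const
    · exact continuous_apply _

lemma continuous_tl : Continuous tl :=
  continuous_pi fun n => continuous_apply (n + 1)

def pairFun (f g : Cantor → Cantor) (x : Cantor) : Cantor :=
  prepend [x 0] ((bif x 0 then g else f) (tl x))

lemma exists_eq_prepend_singleton (x : Cantor) : ∃ b ζ, x = prepend [b] ζ :=
  ⟨_, _, (prepend_head_tl x).symm⟩

lemma pairFun_pairFun (f g f' g' : Cantor → Cantor) (x : Cantor) :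
    pairFun f g (pairFun f' g' x) = pairFun (f ∘ f') (g ∘ g') x := by
  obtain ⟨b, ζ, rfl⟩ := exists_eq_prepend_singleton x
  cases b <;> rfl

lemma pairFun_id_id (x : Cantor) : pairFun id id x = x := by
  simp [pairFun, prepend_head_tl]

lemma continuous_pairFun {f g : Cantor → Cantor} (hf : Continuous f) (hg : Continuous g) :
    Continuous (pairFun f g) := by
  have : Continuous fun p : Bool × Cantor => prepend [p.1] ((bif p.1 then g else f) p.2) :=
    continuous_prod_of_discrete_left.2 fun b => by
      cases b
      · exact (continuous_prepend_singleton _).comp hf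
      · exact (continuous_prepend_singleton _).comp hg
  exact this.comp ((continuous_apply 0).prodMk continuous_tl)

def pairHom : (Cantor ≃ₜ Cantor) × (Cantor ≃ₜ Cantor) →* Cantor ≃ₜ Cantor where
  toFun p :=
    { toFun := pairFun p.1 p.2
      invFun := pairFun p.1.symm p.2.symm
      left_inv x := by simp [pairFun_pairFun, pairFun_id_id]
      right_inv x := by simp [pairFun_pairFun, pairFun_id_id]
      continuous_toFun := continuous_pairFun p.1.continuous p.2.continuous
      continuous_invFun := continuous_pairFun p.1.symm.continuous p.2.symm.continuous }
  map_one' := Homeomorph.ext pairFun_id_id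
  map_mul' p q := Homeomorph.ext fun x => (pairFun_pairFun p.1 p.2 q.1 q.2 x).symm

lemma IsPair.eq_pairHom {k f g : Cantor ≃ₜ Cantor} (hk : IsPair k f g) : k = pairHom (f, g) := by
  ext x : 1
  obtain ⟨b, ζ, rfl⟩ := exists_eq_prepend_singleton x
  cases b
  · exact hk.1 ζ
  · exact hk.2 ζ

lemma isSupportedIn_pairHom_one (f : Cantor ≃ₜ Cantor) :
    IsSupportedIn (pairHom (f, 1)) (cone [false]) := by
  intro x hx
  obtain ⟨b, ζ, rfl⟩ := exists_eq_prepend_singleton x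
  rw [mem_cone_singleton, prepend_singleton_zero, Bool.not_eq_false] at hx
  subst hx
  rfl

lemma length_prefixWord (ψ : Cantor) (n : ℕ) : (prefixWord ψ n).length = n := by
  simp [prefixWord]

lemma prefixWord_succ (ψ : Cantor) (m : ℕ) :
    prefixWord ψ (m + 1) = ψ 0 :: prefixWord (tl ψ) m := by
  simp [prefixWord, List.range_succ_eq_map, tl]

lemma isPrefixOf_prefixWord (ψ : Cantor) (n : ℕ) : IsPrefixOf (prefixWord ψ n) ψ := by
  intro i hi
  simp [prefixWord]

lemma IsPrefixOf.cons {l : List Bool} {ζ : Cantor} (h : IsPrefixOf l ζ) (b : Bool) :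
    IsPrefixOf (b :: l) (prepend [b] ζ) := by
  rintro (_ | i) hi
  · rfl
  · exact h i (Nat.lt_of_succ_lt_succ hi)

namespace Transducer

variable {S S₀ S₁ S' : Type}

lemma oStar_of_simulation (T : Transducer S) (T' : Transducer S') (φ : S → S')
    (ht : ∀ s b, T'.t (φ s) b = φ (T.t s b)) (ho : ∀ s b, T'.o (φ s) b = T.o s b)
    (s : S) (α : List Bool) : T'.oStar (φ s) α = T.oStar s α := by
  induction α generalizing s with
  | nil => rfl
  | cons b α ih => simp only [oStar, ht, ho, ih]

def map (T : Transducer S) (e : S ≃ S') : Transducer S' where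
  s0 := e T.s0
  t s b := e (T.t (e.symm s) b)
  o s b := T.o (e.symm s) b

lemma Computes.map {T : Transducer S} {f : Cantor → Cantor} (h : T.Computes f) (e : S ≃ S') :
    (T.map e).Computes f := by
  have key (α : List Bool) : (T.map e).oStar (T.map e).s0 α = T.oStar T.s0 α :=
    oStar_of_simulation T _ e (by simp [Transducer.map]) (by simp [Transducer.map]) T.s0 α
  intro ψ
  simpa only [key] using h ψ

lemma Computes.isRational [Finite S] {T : Transducer S} {f : Cantor ≃ₜ Cantor}
    (h : T.Computes f) : IsRational f := by
  obtain ⟨n, ⟨e⟩⟩ := Finite.exists_equiv_fin S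
  exact ⟨n, T.map e, h.map e⟩

def copy : Transducer Unit where
  s0 := ()
  t _ _ := ()
  o _ b := [b]

lemma oStar_copy (s : Unit) (α : List Bool) : copy.oStar s α = α := by
  induction α with
  | nil => rfl
  | cons b α ih => exact congrArg (b :: ·) ih

lemma computes_copy : copy.Computes id := fun ψ =>
  ⟨fun n => by rw [oStar_copy]; exact isPrefixOf_prefixWord ψ n,
    fun k => ⟨k, by rw [oStar_copy, length_prefixWord]⟩⟩

def pair (T₀ : Transducer S₀) (T₁ : Transducer S₁) : Transducer (Option (S₀ ⊕ S₁)) where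
  s0 := none
  t
    | none, b => some (bif b then .inr T₁.s0 else .inl T₀.s0)
    | some (.inl s), b => some (.inl (T₀.t s b))
    | some (.inr s), b => some (.inr (T₁.t s b))
  o
    | none, b => [b]
    | some (.inl s), b => T₀.o s b
    | some (.inr s), b => T₁.o s b

lemma pair_oStar_cons (T₀ : Transducer S₀) (T₁ : Transducer S₁) (b : Bool) (α : List Bool) :
    (T₀.pair T₁).oStar none (b :: α) =
      b :: bif b then T₁.oStar T₁.s0 α else T₀.oStar T₀.s0 α := by
  cases b
  · show false :: (T₀.pair T₁).oStar (some (.inl T₀.s0)) α = _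
    exact congrArg (false :: ·) (oStar_of_simulation T₀ (T₀.pair T₁) (fun s => some (.inl s))
      (fun _ _ => rfl) (fun _ _ => rfl) T₀.s0 α)
  · show true :: (T₀.pair T₁).oStar (some (.inr T₁.s0)) α = _
    exact congrArg (true :: ·) (oStar_of_simulation T₁ (T₀.pair T₁) (fun s => some (.inr s))
      (fun _ _ => rfl) (fun _ _ => rfl) T₁.s0 α)

lemma computes_prepend {T : Transducer S} {U : Transducer S'} {F : Cantor → Cantor}
    (hT : T.Computes F) (b : Bool) (ζ : Cantor)
    (hU : ∀ α, U.oStar U.s0 (b :: α) = b :: T.oStar T.s0 α) :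
    (∀ n, IsPrefixOf (U.oStar U.s0 (prefixWord (prepend [b] ζ) n)) (prepend [b] (F ζ))) ∧
      ∀ k, ∃ n, k ≤ (U.oStar U.s0 (prefixWord (prepend [b] ζ) n)).length := by
  constructor
  · rintro (_ | m)
    · intro i hi
      simp [prefixWord, oStar] at hi
    · rw [prefixWord_succ, prepend_singleton_zero, tl_prepend_singleton, hU]
      exact ((hT ζ).1 m).cons b
  · intro k
    obtain ⟨m, hm⟩ := (hT ζ).2 k
    refine ⟨m + 1, ?_⟩
    rw [prefixWord_succ, prepend_singleton_zero, tl_prepend_singleton, hU, List.length_cons]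
    exact hm.trans (Nat.le_succ _)

lemma Computes.pair {T₀ : Transducer S₀} {T₁ : Transducer S₁} {f g : Cantor → Cantor}
    (h₀ : T₀.Computes f) (h₁ : T₁.Computes g) : (T₀.pair T₁).Computes (pairFun f g) := by
  intro ψ
  obtain ⟨b, ζ, rfl⟩ := exists_eq_prepend_singleton ψ
  cases b
  · exact computes_prepend h₀ false ζ (pair_oStar_cons T₀ T₁ false)
  · exact computes_prepend h₁ true ζ (pair_oStar_cons T₀ T₁ true)

end Transducer

lemma isRational_one : IsRational 1 :=
  Transducer.computes_copy.isRational

lemma IsRational.pairHom {f g : Cantor ≃ₜ Cantor} (hf : IsRational f) (hg : IsRational g) :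
    IsRational (pairHom (f, g)) := by
  obtain ⟨n₀, T₀, h₀⟩ := hf
  obtain ⟨n₁, T₁, h₁⟩ := hg
  exact (h₀.pair h₁).isRational

theorem commutator_pair_mem_normal_general (R : Subgroup (Cantor ≃ₜ Cantor))
    (hR : ∀ f : Cantor ≃ₜ Cantor, f ∈ R ↔ IsRational f)
    (N : Subgroup ↥R) (hN : N.Normal)
    (f₁ : ↥R) (hf₁ : f₁ ∈ N)
    (hdisj : Disjoint (⇑(f₁ : Cantor ≃ₜ Cantor) '' cone [false]) (cone [false])) :
    ∀ g h k : ↥R,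
      IsPair (k : Cantor ≃ₜ Cantor) ((g⁻¹ * h⁻¹ * g * h : ↥R) : Cantor ≃ₜ Cantor) 1 →
      k ∈ N := by
  intro g h k hk
  set A := pairHom ((g : Cantor ≃ₜ Cantor), 1)
  set B := pairHom ((h : Cantor ≃ₜ Cantor), 1)
  have hA : IsSupportedIn A (cone [false]) := isSupportedIn_pairHom_one g
  have hB : IsSupportedIn B (cone [false]) := isSupportedIn_pairHom_one h
  have pair_mem (u : ↥R) : pairHom (u, 1) ∈ R :=
    (hR _).2 (((hR u).1 u.2).pairHom isRational_one)
  set a : ↥R := ⟨A, pair_mem g⟩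
  set b : ↥R := ⟨B, pair_mem h⟩
  set a' := a * f₁ * a⁻¹ * f₁⁻¹
  have ha' : a' ∈ N := mul_mem (hN.conj_mem f₁ hf₁ a) (inv_mem hf₁)
  have hk_eq : k = a'⁻¹ * b⁻¹ * a' * b := Subtype.ext <| calc
    (k : Cantor ≃ₜ Cantor) = pairHom (↑(g⁻¹ * h⁻¹ * g * h), 1) := hk.eq_pairHom
    _ = A⁻¹ * B⁻¹ * A * B := by simp [A, B, ← map_inv, ← map_mul]
    _ = _ := (hA.commutator_eq_of_eqOn hB (hA.eqOn_mul_mul_inv_mul_inv hdisj)).symm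
  rw [hk_eq, mul_assoc _ b⁻¹, mul_assoc]
  exact mul_mem (inv_mem ha') (by simpa using hN.conj_mem a' ha' b⁻¹)

/-- if `N` is a nontrivial normal subgroup of `R` and `f₁ ∈ N` maps `I₀`
off itself, then `([g, h], 1) ∈ N` for all `g, h ∈ R`, where `[g, h] = g⁻¹h⁻¹gh`. -/
theorem commutator_pair_mem_normal (R : Subgroup (Cantor ≃ₜ Cantor))
    (hR : ∀ f : Cantor ≃ₜ Cantor, f ∈ R ↔ IsRational f)
    (N : Subgroup ↥R) (hN : N.Normal) (hNt : N ≠ ⊥)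
    (f₁ : ↥R) (hf₁ : f₁ ∈ N)
    (hdisj : Disjoint (⇑(f₁ : Cantor ≃ₜ Cantor) '' cone [false]) (cone [false])) :
    ∀ g h k : ↥R,
      IsPair (k : Cantor ≃ₜ Cantor) ((g⁻¹ * h⁻¹ * g * h : ↥R) : Cantor ≃ₜ Cantor) 1 →
      k ∈ N :=
  commutator_pair_mem_normal_general R hR N hN f₁ hf₁ hdisj
end

section
/- Let p be prime, and let f, f' be rational homeomorphisms of {0,1}^ω such that f has a transducer with an accessible cycle of length not divisible by p, and f' has a transducer with fewer than p states. Then the composition f' ∘ f has a transducer with an accessible cycle of length not divisible by p. -/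
theorem IsPrefixOf.eq_prefixWord {l : List Bool} {ψ : Cantor} (h : IsPrefixOf l ψ) :
    l = prefixWord ψ l.length :=
  List.ext_get (by simp [prefixWord]) fun i h₁ _ => by simpa [prefixWord] using h i h₁

theorem prefixWord_prefix_prefixWord (ψ : Cantor) {m n : ℕ} (h : m ≤ n) :
    prefixWord ψ m <+: prefixWord ψ n := by
  have hm : prefixWord ψ m = (prefixWord ψ n).take m := by
    simp [prefixWord, ← List.map_take, List.take_range, Nat.min_eq_left h]
  exact hm ▸ List.take_prefix _ _

namespace Transducer

variable {S S' : Type}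

theorem tStar_append (T : Transducer S) (s : S) (u v : List Bool) :
    T.tStar s (u ++ v) = T.tStar (T.tStar s u) v := by
  induction u generalizing s with
  | nil => rfl
  | cons b u ih => exact ih _

theorem oStar_append (T : Transducer S) (s : S) (u v : List Bool) :
    T.oStar s (u ++ v) = T.oStar s u ++ T.oStar (T.tStar s u) v := by
  induction u generalizing s with
  | nil => rfl
  | cons b u ih => simp [oStar, tStar, ih]

theorem oStar_prefix_oStar (T : Transducer S) (s : S) {u v : List Bool} (h : u <+: v) :
    T.oStar s u <+: T.oStar s v := by
  obtain ⟨w, rfl⟩ := h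
  exact oStar_append T s u w ▸ List.prefix_append _ _

theorem tStar_flatten_replicate (T : Transducer S) {c : S} {γ : List Bool}
    (hc : T.tStar c γ = c) (j : ℕ) : T.tStar c (List.replicate j γ).flatten = c := by
  induction j with
  | zero => rfl
  | succ j ih => rw [List.replicate_succ, List.flatten_cons, tStar_append, hc, ih]

/-- The product transducer that runs `T'` on the output of `T`. -/
def comp (T : Transducer S) (T' : Transducer S') : Transducer (S × S') where
  s0 := (T.s0, T'.s0)
  t s b := (T.t s.1 b, T'.tStar s.2 (T.o s.1 b))
  o s b := T'.oStar s.2 (T.o s.1 b)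

theorem comp_t (T : Transducer S) (T' : Transducer S') (s : S) (s' : S') (b : Bool) :
    (T.comp T').t (s, s') b = (T.t s b, T'.tStar s' (T.o s b)) := rfl

theorem comp_o (T : Transducer S) (T' : Transducer S') (s : S) (s' : S') (b : Bool) :
    (T.comp T').o (s, s') b = T'.oStar s' (T.o s b) := rfl

theorem tStar_comp (T : Transducer S) (T' : Transducer S') (s : S) (s' : S') (w : List Bool) :
    (T.comp T').tStar (s, s') w = (T.tStar s w, T'.tStar s' (T.oStar s w)) := by
  induction w generalizing s s' with
  | nil => rfl
  | cons b w ih => simp only [tStar, oStar, comp_t, ih, tStar_append]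

theorem oStar_comp (T : Transducer S) (T' : Transducer S') (s : S) (s' : S') (w : List Bool) :
    (T.comp T').oStar (s, s') w = T'.oStar s' (T.oStar s w) := by
  induction w generalizing s s' with
  | nil => rfl
  | cons b w ih => simp only [oStar, comp_t, comp_o, ih, oStar_append]

def reindex (e : S ≃ S') (T : Transducer S) : Transducer S' where
  s0 := e T.s0
  t s b := e (T.t (e.symm s) b)
  o s b := T.o (e.symm s) b

theorem reindex_s0 (e : S ≃ S') (T : Transducer S) : (T.reindex e).s0 = e T.s0 := rfl

theorem reindex_t (e : S ≃ S') (T : Transducer S) (s : S) (b : Bool) :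
    (T.reindex e).t (e s) b = e (T.t s b) := by
  simp [reindex]

theorem reindex_o (e : S ≃ S') (T : Transducer S) (s : S) (b : Bool) :
    (T.reindex e).o (e s) b = T.o s b := by
  simp [reindex]

theorem tStar_reindex (e : S ≃ S') (T : Transducer S) (s : S) (w : List Bool) :
    (T.reindex e).tStar (e s) w = e (T.tStar s w) := by
  induction w generalizing s with
  | nil => rfl
  | cons b w ih => simp only [tStar, reindex_t, ih]

theorem oStar_reindex (e : S ≃ S') (T : Transducer S) (s : S) (w : List Bool) :
    (T.reindex e).oStar (e s) w = T.oStar s w := by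
  induction w generalizing s with
  | nil => rfl
  | cons b w ih => simp only [oStar, reindex_t, reindex_o, ih]

theorem Computes.reindex {T : Transducer S} {f : Cantor → Cantor} (hT : T.Computes f)
    (e : S ≃ S') : (T.reindex e).Computes f := by
  simpa only [Computes, reindex_s0, oStar_reindex] using hT

theorem Computes.comp {T : Transducer S} {T' : Transducer S'} {f g : Cantor → Cantor}
    (hT : T.Computes f) (hT' : T'.Computes g) : (T.comp T').Computes (g ∘ f) := by
  intro ψ
  have hout : ∀ n, (T.comp T').oStar (T.comp T').s0 (prefixWord ψ n) =
      T'.oStar T'.s0 (prefixWord (f ψ) (T.oStar T.s0 (prefixWord ψ n)).length) := fun n => by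
    rw [← ((hT ψ).1 n).eq_prefixWord]
    exact oStar_comp T T' _ _ _
  refine ⟨fun n => hout n ▸ (hT' (f ψ)).1 _, fun k => ?_⟩
  obtain ⟨N, hN⟩ := (hT' (f ψ)).2 k
  obtain ⟨n, hn⟩ := (hT ψ).2 N
  refine ⟨n, hout n ▸ hN.trans (oStar_prefix_oStar T' _ ?_).length_le⟩
  exact prefixWord_prefix_prefixWord _ (by simpa [prefixWord] using hn)

def ObliviousTo (T : Transducer S) (p : ℕ) : Prop :=
  ∃ α γ : List Bool, γ ≠ [] ∧ T.tStar (T.tStar T.s0 α) γ = T.tStar T.s0 α ∧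
    ¬ p ∣ γ.length

theorem ObliviousTo.reindex {T : Transducer S} {p : ℕ} (hT : T.ObliviousTo p) (e : S ≃ S') :
    (T.reindex e).ObliviousTo p := by
  obtain ⟨α, γ, hγ, hcyc, hp⟩ := hT
  refine ⟨α, γ, hγ, ?_, hp⟩
  rw [reindex_s0, tStar_reindex, tStar_reindex, hcyc]

theorem obliviousTo_of_tStar_eq {T : Transducer S} {p : ℕ} (hp : p.Prime) {α γ : List Bool}
    (hγ : γ ≠ []) (hγp : ¬ p ∣ γ.length) {j k : ℕ} (hjk : j < k) (hkp : k < p)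
    (h : T.tStar T.s0 (α ++ (List.replicate j γ).flatten) =
      T.tStar T.s0 (α ++ (List.replicate k γ).flatten)) :
    T.ObliviousTo p := by
  refine ⟨α ++ (List.replicate j γ).flatten, (List.replicate (k - j) γ).flatten, ?_, ?_, ?_⟩
  · simp [hγ, Nat.sub_ne_zero_of_lt hjk]
  · rw [← tStar_append, List.append_assoc, ← List.flatten_append, ← List.replicate_add,
      Nat.add_sub_cancel' hjk.le, h]
  · rw [List.length_flatten, List.map_replicate, List.sum_replicate, smul_eq_mul, hp.dvd_mul,
      not_or]
    exact ⟨Nat.not_dvd_of_pos_of_lt (Nat.sub_pos_of_lt hjk) (by omega), hγp⟩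

/-- The states of `T.comp T'` along the inputs `α γ^j` all lie over the same state of `T`,
so by pigeonhole two of them with `j < k ≤ card S'` coincide. -/
theorem ObliviousTo.comp {T : Transducer S} {p : ℕ} (hp : p.Prime) (hT : T.ObliviousTo p)
    (T' : Transducer S') [Fintype S'] (hS' : Fintype.card S' < p) :
    (T.comp T').ObliviousTo p := by
  obtain ⟨α, γ, hγ, hcyc, hγp⟩ := hT
  let state (j : ℕ) := (T.comp T').tStar (T.comp T').s0 (α ++ (List.replicate j γ).flatten)
  have hfst (j : ℕ) : (state j).1 = T.tStar T.s0 α := by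
    rw [show state j = (T.comp T').tStar (T.s0, T'.s0) _ from rfl, tStar_comp, tStar_append,
      tStar_flatten_replicate T hcyc]
  obtain ⟨j, k, hjk, hsnd⟩ := Fintype.exists_ne_map_eq_of_card_lt
    (fun j : Fin (Fintype.card S' + 1) => (state j).2) (by simp)
  have heq : state j = state k := Prod.ext (by rw [hfst, hfst]) hsnd
  rcases Fin.val_ne_of_ne hjk |>.lt_or_gt with hlt | hlt
  · exact obliviousTo_of_tStar_eq hp hγ hγp hlt (by omega) heq
  · exact obliviousTo_of_tStar_eq hp hγ hγp hlt (by omega) heq.symm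

end Transducer

theorem oblivious_comp_general (p : ℕ) (hp : p.Prime) (f f' : Cantor ≃ₜ Cantor)
    (hT : ∃ (n : ℕ) (T : Transducer (Fin n)), T.Computes ⇑f ∧
      ∃ α γ : List Bool, γ ≠ [] ∧ T.tStar (T.tStar T.s0 α) γ = T.tStar T.s0 α ∧
        ¬ p ∣ γ.length)
    (hT' : ∃ n' : ℕ, n' < p ∧ ∃ T' : Transducer (Fin n'), T'.Computes ⇑f') :
    ∃ (m : ℕ) (T'' : Transducer (Fin m)), T''.Computes ⇑(f' * f) ∧
      ∃ α γ : List Bool, γ ≠ [] ∧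
        T''.tStar (T''.tStar T''.s0 α) γ = T''.tStar T''.s0 α ∧
        ¬ p ∣ γ.length := by
  obtain ⟨n, T, hTf, hTp⟩ := hT
  obtain ⟨n', hn'p, T', hT'f'⟩ := hT'
  have hcomp : (T.comp T').ObliviousTo p :=
    Transducer.ObliviousTo.comp hp hTp T' (by simpa using hn'p)
  exact ⟨n * n', _, (hTf.comp hT'f').reindex finProdFinEquiv, hcomp.reindex _⟩

/-- if `f` has a transducer with an accessible cycle of length not
divisible by the prime `p`, and `f'` has a transducer with fewer than `p` states, then
`f' ∘ f` has a transducer with an accessible cycle of length not divisible by `p`. -/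
theorem oblivious_comp (p : ℕ) (hp : p.Prime) (f f' : Cantor ≃ₜ Cantor)
    (hf : IsRational f) (hf' : IsRational f')
    (hT : ∃ (n : ℕ) (T : Transducer (Fin n)), T.Computes ⇑f ∧
      ∃ α γ : List Bool, γ ≠ [] ∧ T.tStar (T.tStar T.s0 α) γ = T.tStar T.s0 α ∧
        ¬ p ∣ γ.length)
    (hT' : ∃ n' : ℕ, n' < p ∧ ∃ T' : Transducer (Fin n'), T'.Computes ⇑f') :
    ∃ (m : ℕ) (T'' : Transducer (Fin m)), T''.Computes ⇑(f' * f) ∧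
      ∃ α γ : List Bool, γ ≠ [] ∧
        T''.tStar (T''.tStar T''.s0 α) γ = T''.tStar T''.s0 α ∧
        ¬ p ∣ γ.length :=
  oblivious_comp_general p hp f f' hT hT'
end
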